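/- arXiv:2112.04033 — 3 statements merged into one kernel-verified Lean document; each statement's English description precedes it below -/
import Mathlib

section
/- For any set S of vertices in the hypercube {0,1}^N with |S| ≥ 2^N · e^{-2c²N} for some c > 0, the Hamming-distance-⌈2cN⌉ neighborhood of S contains more than half of all vertices of the hypercube, i.e., |B(S, ⌈2cN⌉)| > 2^{N-1}. -/
open Real Finset

private lemma ham_cons (n : ℕ) (a b : Bool) (x y : Fin n → Bool) :
    hammingDist (Fin.cons a x : ∀ _ : Fin (n+1), Bool) (Fin.cons b y)
      = (if a = b then 0 else 1) + hammingDist x y := by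
  simp only [hammingDist, Finset.card_filter, Fin.sum_univ_succ, Fin.cons_zero, Fin.cons_succ]
  congr 1
  rcases a with _|_ <;> rcases b with _|_ <;> simp

private lemma sum_cube_succ (n : ℕ) (F : (Fin (n+1) → Bool) → ℝ) :
    ∑ x, F x = ∑ z : Fin n → Bool, (F (Fin.cons false z) + F (Fin.cons true z)) := by
  rw [Fintype.sum_equiv (Fin.consEquiv fun _ => Bool).symm F
       (fun p => F (Fin.cons p.1 p.2)) (fun x => by simp [Fin.consEquiv]),
     Fintype.sum_prod_type]
  simp [Bool.univ_eq, ← Finset.sum_add_distrib, add_comm]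

private lemma two_point (l a b : ℝ) (h : |a - b| ≤ 1) :
    exp (l*a) + exp (l*b) ≤ 2 * exp (l*(a+b)/2 + l^2/8) := by
  have e1 : l*a = l*(a+b)/2 + l*(a-b)/2 := by ring
  have e2 : l*b = l*(a+b)/2 + -(l*(a-b)/2) := by ring
  have key : exp (l*a) + exp (l*b)
      = 2 * exp (l*(a+b)/2) * Real.cosh (l*(a-b)/2) := by
    rw [Real.cosh_eq, e1, e2, Real.exp_add, Real.exp_add]; ring
  rw [key, Real.exp_add]
  have h1 : Real.cosh (l*(a-b)/2) ≤ exp (l^2/8) := by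
    refine (Real.cosh_le_exp_half_sq _).trans (Real.exp_le_exp.2 ?_)
    have h3 : (a-b)^2 ≤ 1 := by nlinarith [sq_abs (a-b), abs_nonneg (a-b)]
    nlinarith [sq_nonneg l]
  have h4 : (0:ℝ) < exp (l*(a+b)/2) := Real.exp_pos _
  nlinarith [Real.exp_pos (l^2/8)]

private lemma mgf_bound : ∀ (n : ℕ) (f : (Fin n → Bool) → ℝ) (l : ℝ),
    (∀ x y, f x - f y ≤ hammingDist x y) →
    ∑ x, exp (l * f x) ≤ 2^n * exp (l * ((∑ x, f x)/2^n) + l^2 * n / 8) := by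
  intro n
  induction n with
  | zero =>
      intro f l _
      rw [Fintype.sum_unique, Fintype.sum_unique]
      norm_num
  | succ n ih =>
      intro f l hf
      set f0 : (Fin n → Bool) → ℝ := fun z => f (Fin.cons false z) with hf0
      set f1 : (Fin n → Bool) → ℝ := fun z => f (Fin.cons true z) with hf1
      have lip : ∀ (b : Bool) (z w : Fin n → Bool),
          f (Fin.cons b z) - f (Fin.cons b w) ≤ hammingDist z w := by
        intro b z w
        have := hf (Fin.cons b z) (Fin.cons b w)
        rwa [ham_cons, if_pos rfl, zero_add] at this
      have lip0 : ∀ z w, f0 z - f0 w ≤ hammingDist z w := lip false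
      have lip1 : ∀ z w, f1 z - f1 w ≤ hammingDist z w := lip true
      have diff : ∀ z, |f0 z - f1 z| ≤ 1 := by
        intro z
        have h1 := hf (Fin.cons false z) (Fin.cons true z)
        have h2 := hf (Fin.cons true z) (Fin.cons false z)
        rw [ham_cons] at h1 h2
        simp only [hammingDist_self] at h1 h2
        norm_num at h1 h2
        simp only [hf0, hf1]
        rw [abs_le]
        constructor <;> linarith
      set m0 : ℝ := (∑ z, f0 z)/2^n with hm0
      set m1 : ℝ := (∑ z, f1 z)/2^n with hm1
      have hmdiff : |m0 - m1| ≤ 1 := by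
        rw [hm0, hm1, div_sub_div_same, ← Finset.sum_sub_distrib, abs_div,
          abs_of_pos (by positivity : (0:ℝ) < (2:ℝ)^n), div_le_one (by positivity)]
        calc |∑ z, (f0 z - f1 z)| ≤ ∑ z, |f0 z - f1 z| := Finset.abs_sum_le_sum_abs _ _
          _ ≤ ∑ _z : Fin n → Bool, (1:ℝ) := Finset.sum_le_sum (fun z _ => diff z)
          _ = 2^n := by simp [Fintype.card_fun]
      have hmean : (∑ x, f x)/2^(n+1) = (m0 + m1)/2 := by
        have hsplit : (∑ x, f x) = (∑ z, f0 z) + (∑ z, f1 z) := by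
          rw [sum_cube_succ n f, Finset.sum_add_distrib]
        rw [hsplit, hm0, hm1, ← add_div, div_div, ← pow_succ]
      push_cast
      calc ∑ x, exp (l * f x)
          = (∑ z, exp (l * f0 z)) + (∑ z, exp (l * f1 z)) := by
            rw [sum_cube_succ n (fun x => exp (l * f x)), Finset.sum_add_distrib]
        _ ≤ 2^n * exp (l * m0 + l^2 * n / 8) + 2^n * exp (l * m1 + l^2 * n / 8) :=
            add_le_add (ih f0 l lip0) (ih f1 l lip1)
        _ = 2^n * exp (l^2 * n / 8) * (exp (l * m0) + exp (l * m1)) := by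
            rw [Real.exp_add, Real.exp_add]; ring
        _ ≤ 2^n * exp (l^2 * n / 8) * (2 * exp (l*(m0+m1)/2 + l^2/8)) :=
            mul_le_mul_of_nonneg_left (two_point l m0 m1 hmdiff) (by positivity)
        _ = 2^(n+1) * exp (l * ((∑ x, f x)/2^(n+1)) + l^2 * ((n:ℝ)+1) / 8) := by
            rw [hmean]
            have h : l * ((m0+m1)/2) + l^2 * ((n:ℝ)+1)/8
                = l^2 * (n:ℝ)/8 + (l*(m0+m1)/2 + l^2/8) := by ring
            rw [h]
            simp only [Real.exp_add]
            ring

private lemma upper_tail (n : ℕ) (hn : 1 ≤ n) (f : (Fin n → Bool) → ℝ)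
    (hf : ∀ x y, f x - f y ≤ hammingDist x y) (t : ℝ) (ht : 0 < t) :
    ((Finset.univ.filter (fun x => (∑ y, f y)/2^n + t ≤ f x)).card : ℝ)
      ≤ 2^n * exp (-2*t^2/n) := by
  have hnR : (0:ℝ) < n := by exact_mod_cast hn
  set m : ℝ := (∑ y, f y)/2^n with hm
  set l : ℝ := 4*t/n with hl
  have hlpos : 0 < l := by positivity
  have h1 : ((Finset.univ.filter (fun x => m + t ≤ f x)).card : ℝ) * exp (l*(m+t))
      ≤ ∑ x, exp (l * f x) := by
    calc ((Finset.univ.filter (fun x => m + t ≤ f x)).card : ℝ) * exp (l*(m+t))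
        = ∑ _x ∈ Finset.univ.filter (fun x => m + t ≤ f x), exp (l*(m+t)) := by
          rw [Finset.sum_const, nsmul_eq_mul]
      _ ≤ ∑ x ∈ Finset.univ.filter (fun x => m + t ≤ f x), exp (l * f x) :=
          Finset.sum_le_sum (fun x hx => Real.exp_le_exp.2
            (mul_le_mul_of_nonneg_left (Finset.mem_filter.1 hx).2 hlpos.le))
      _ ≤ ∑ x, exp (l * f x) :=
          Finset.sum_le_sum_of_subset_of_nonneg (Finset.filter_subset _ _)
            (fun _ _ _ => (Real.exp_pos _).le)
  have h2 := (mgf_bound n f l hf)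
  have hepos := Real.exp_pos (l*(m+t))
  have h3 : ((Finset.univ.filter (fun x => m + t ≤ f x)).card : ℝ)
      ≤ (2^n * exp (l * m + l^2*n/8)) / exp (l*(m+t)) := by
    rw [le_div_iff₀ hepos]
    exact h1.trans h2
  refine h3.trans (le_of_eq ?_)
  rw [mul_div_assoc, ← Real.exp_sub]
  congr 1
  rw [hl]
  field_simp
  ring

private lemma lower_tail (n : ℕ) (hn : 1 ≤ n) (f : (Fin n → Bool) → ℝ)
    (hf : ∀ x y, f x - f y ≤ hammingDist x y) (t : ℝ) (ht : 0 < t) :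
    ((Finset.univ.filter (fun x => f x ≤ (∑ y, f y)/2^n - t)).card : ℝ)
      ≤ 2^n * exp (-2*t^2/n) := by
  have hf' : ∀ x y, (fun z => -f z) x - (fun z => -f z) y ≤ hammingDist x y := by
    intro x y
    have h := hf y x
    rw [hammingDist_comm] at h
    simp only
    linarith
  have h := upper_tail n hn (fun z => -f z) hf' t ht
  have hset : (Finset.univ.filter (fun x => f x ≤ (∑ y, f y)/2^n - t))
      = (Finset.univ.filter (fun x => (∑ y, (fun z => -f z) y)/2^n + t ≤ (fun z => -f z) x)) := by
    apply Finset.filter_congr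
    intro x _
    simp only [Finset.sum_neg_distrib, neg_div, eq_iff_iff]
    constructor <;> intro <;> simp_all <;> linarith
  rw [hset]
  exact h


/-- Hamming-ball expansion: if `S ⊆ {0,1}^N` has `|S| ≥ 2^N e^{-2c²N}`, then the set of
vertices within Hamming distance `⌈2cN⌉` of `S` contains more than half of the cube. -/
theorem stmt_0 (N : ℕ) (hN : 1 ≤ N) (c : ℝ) (hc : 0 < c)
    (S : Finset (Fin N → Bool))
    (hS : (2 : ℝ) ^ N * Real.exp (-2 * c ^ 2 * N) ≤ (S.card : ℝ)) :
    ((2 : ℝ) ^ (N - 1)) <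
      (((Finset.univ : Finset (Fin N → Bool)).filter
        (fun y => ∃ x ∈ S, hammingDist x y ≤ ⌈2 * c * (N : ℝ)⌉₊)).card : ℝ) := by
  classical
  have hNR : (1:ℝ) ≤ N := by exact_mod_cast hN
  have h2pow : (2:ℝ)^N = 2^(N-1) * 2 := by
    rw [← pow_succ]
    congr 1
    omega
  have hSpos : (0:ℝ) < S.card :=
    lt_of_lt_of_le (by positivity) hS
  have hne : S.Nonempty := Finset.card_pos.1 (by exact_mod_cast hSpos)
  by_cases hhalf : 1/2 < Real.exp (-2 * c^2 * N)
  · -- trivial case: S itself is more than half the cube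
    have hsub : S ⊆ (Finset.univ : Finset (Fin N → Bool)).filter
        (fun y => ∃ x ∈ S, hammingDist x y ≤ ⌈2 * c * (N : ℝ)⌉₊) := by
      intro x hx
      exact Finset.mem_filter.2 ⟨Finset.mem_univ _, ⟨x, hx, by simp⟩⟩
    have hlt : (2:ℝ)^(N-1) < S.card := by
      have hp : (0:ℝ) < 2^(N-1) := by positivity
      nlinarith
    exact lt_of_lt_of_le hlt (by exact_mod_cast Finset.card_le_card hsub)
  · push_neg at hhalf
    set r : ℕ := ⌈2 * c * (N : ℝ)⌉₊ with hr
    have hrge : 2 * c * (N:ℝ) ≤ r := Nat.le_ceil _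
    set f : (Fin N → Bool) → ℝ := fun x => ((S.inf' hne fun s => hammingDist s x : ℕ) : ℝ) with hfdef
    have hlip : ∀ x y, f x - f y ≤ hammingDist x y := by
      intro x y
      obtain ⟨s, hs, hsmin⟩ := Finset.exists_mem_eq_inf' hne (fun s => hammingDist s y)
      have h1 : (S.inf' hne fun s => hammingDist s x) ≤ hammingDist s x :=
        Finset.inf'_le _ hs
      have h2 : hammingDist s x ≤ hammingDist s y + hammingDist y x :=
        hammingDist_triangle s y x
      have h3 : (S.inf' hne fun s => hammingDist s y) = hammingDist s y := hsmin
      have h4 : hammingDist y x = hammingDist x y := hammingDist_comm y x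
      simp only [hfdef]
      rw [h3]
      have : (S.inf' hne fun s => hammingDist s x) ≤ hammingDist s y + hammingDist x y := by
        omega
      push_cast
      have := (Nat.cast_le (α := ℝ)).2 this
      push_cast at this
      linarith
    have hf0 : ∀ s ∈ S, f s = 0 := by
      intro s hs
      simp only [hfdef]
      norm_cast
      exact Nat.le_antisymm (by simpa using Finset.inf'_le (fun u => hammingDist u s) hs) (Nat.zero_le _)
    set m : ℝ := (∑ y, f y)/2^N with hm
    have hmnn : 0 ≤ m := by
      apply div_nonneg _ (by positivity)
      exact Finset.sum_nonneg (fun y _ => by simp only [hfdef]; positivity)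
    -- Step 1 : m ≤ c N
    have hEc : m ≤ c * N := by
      by_contra hE
      push_neg at hE
      have hmpos : 0 < m := lt_trans (by positivity) hE
      have hsub : S ⊆ Finset.univ.filter (fun x => f x ≤ m - m) := by
        intro s hs
        exact Finset.mem_filter.2 ⟨Finset.mem_univ _, by rw [hf0 s hs]; linarith⟩
      have h1 : (S.card : ℝ) ≤ ((Finset.univ.filter (fun x => f x ≤ m - m)).card : ℝ) := by
        exact_mod_cast Finset.card_le_card hsub
      have h2 := lower_tail N hN f hlip m hmpos
      have h3 : Real.exp (-2*m^2/N) < Real.exp (-2*c^2*N) := by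
        apply Real.exp_lt_exp.2
        rw [div_lt_iff₀ (by linarith : (0:ℝ) < (N:ℝ))]
        have hcN : (0:ℝ) < c * N := by positivity
        nlinarith [mul_pos (sub_pos.2 hE) (add_pos hmpos hcN)]
      have h4 : (2:ℝ)^N * Real.exp (-2*m^2/N) < 2^N * Real.exp (-2*c^2*N) := by
        have : (0:ℝ) < 2^N := by positivity
        nlinarith
      linarith
    -- Step 2 : upper tail
    set t : ℝ := (r:ℝ) + 1 - m with htdef
    have htge : c * N + 1 ≤ t := by
      have : c * N ≤ 2 * c * N - c * N := by ring_nf; linarith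
      simp only [htdef]
      linarith
    have htpos : 0 < t := by nlinarith
    have hcomp : (Finset.univ.filter (fun y : Fin N → Bool => ¬ ∃ x ∈ S, hammingDist x y ≤ r))
        ⊆ Finset.univ.filter (fun x => m + t ≤ f x) := by
      intro y hy
      have hy' := (Finset.mem_filter.1 hy).2
      push_neg at hy'
      refine Finset.mem_filter.2 ⟨Finset.mem_univ _, ?_⟩
      have hge : (r + 1 : ℕ) ≤ (S.inf' hne fun s => hammingDist s y) := by
        apply Finset.le_inf'
        intro s hs
        have := hy' s hs
        omega
      have : ((r:ℝ) + 1) ≤ f y := by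
        simp only [hfdef]
        exact_mod_cast hge
      simp only [htdef]
      linarith
    have h5 := upper_tail N hN f hlip t htpos
    have h6 : Real.exp (-2*t^2/N) < Real.exp (-2*c^2*N) := by
      apply Real.exp_lt_exp.2
      rw [div_lt_iff₀ (by linarith : (0:ℝ) < (N:ℝ))]
      have hcN : (0:ℝ) < c * N := by positivity
      have htgt : c * N < t := by linarith
      nlinarith [mul_pos (sub_pos.2 htgt) (add_pos htpos hcN)]
    have h7 : ((Finset.univ.filter (fun y : Fin N → Bool => ¬ ∃ x ∈ S, hammingDist x y ≤ r)).card : ℝ)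
        < (2:ℝ)^(N-1) := by
      have hc1 : ((Finset.univ.filter (fun y : Fin N → Bool => ¬ ∃ x ∈ S, hammingDist x y ≤ r)).card : ℝ)
          ≤ ((Finset.univ.filter (fun x => m + t ≤ f x)).card : ℝ) := by
        exact_mod_cast Finset.card_le_card hcomp
      have hp : (0:ℝ) < 2^N := by positivity
      nlinarith
    have hcards : ((Finset.univ.filter (fun y : Fin N → Bool => ∃ x ∈ S, hammingDist x y ≤ r)).card : ℝ)
        + ((Finset.univ.filter (fun y : Fin N → Bool => ¬ ∃ x ∈ S, hammingDist x y ≤ r)).card : ℝ)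
        = (2:ℝ)^N := by
      have := Finset.card_filter_add_card_filter_not
        (s := (Finset.univ : Finset (Fin N → Bool)))
        (p := fun y => ∃ x ∈ S, hammingDist x y ≤ r)
      have hcard : (Finset.univ : Finset (Fin N → Bool)).card = 2^N := by
        simp [Fintype.card_fun]
      rw [hcard] at this
      exact_mod_cast this
    linarith
end

section
/- For any k ≥ 1 and n ≥ 2k, the sum of binomial coefficients ∑_{i=0}^{⌈n/2⌉ - k} C(n,i) is at most 2^{n-1} · e^{-2(k-1)²/n} (Hoeffding bound on the binomial lower tail). -/
/-!
Write `S m = ∑_{i<m} C(n,i)` and `M = ⌈n/2⌉`. Since `C(n,i) (n-i) = C(n,i+1) (i+1)`, the partial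
sums satisfy `S m (n+1-m) ≤ m S (m+1)`; combined with the Padé bound `e^c ≤ (2+c)/(2-c)` this gives
`S (M-j-1) ≤ e^{-4(j+1)/(n+1)} S (M-j)`. Chaining these steps down from the middle yields
`S (M-j) ≤ e^{-2j(j+1)/(n+1)} S M`, and `S M ≤ 2^{n-1}` by the symmetry `C(n,i) = C(n,n-i)`.
-/

open Finset

namespace Nat

theorem two_mul_sum_range_choose_le {n M : ℕ} (hM : 2 * M ≤ n + 1) :
    2 * ∑ i ∈ range M, n.choose i ≤ 2 ^ n :=
  calc 2 * ∑ i ∈ range M, n.choose i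
      = ∑ i ∈ range M, n.choose i + ∑ i ∈ range M, n.choose (n - i) := by
        rw [two_mul]
        congr 1
        exact sum_congr rfl fun i hi ↦ (choose_symm (by have := mem_range.1 hi; lia)).symm
    _ = ∑ i ∈ range M, n.choose i + ∑ i ∈ Ico (n + 1 - M) (n + 1), n.choose i := by
        rw [range_eq_Ico, sum_Ico_reflect _ _ (by lia), Nat.sub_zero]
    _ ≤ ∑ i ∈ range M, n.choose i + ∑ i ∈ Ico M (n + 1), n.choose i := by
        gcongr
        lia
    _ = 2 ^ n := by rw [sum_range_add_sum_Ico _ (by lia), sum_range_choose]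

theorem sum_range_choose_mul_le (n m : ℕ) :
    (∑ i ∈ range m, n.choose i) * (n + 1 - m) ≤ m * ∑ i ∈ range (m + 1), n.choose i :=
  calc (∑ i ∈ range m, n.choose i) * (n + 1 - m)
      ≤ ∑ i ∈ range m, n.choose i * (n - i) := by
        rw [sum_mul]
        exact sum_le_sum fun i hi ↦ Nat.mul_le_mul_left _ (by have := mem_range.1 hi; lia)
    _ = ∑ i ∈ range m, n.choose (i + 1) * (i + 1) := by simp only [choose_succ_right_eq]
    _ ≤ ∑ i ∈ range m, m * n.choose (i + 1) := by
        exact sum_le_sum fun i hi ↦ (mul_comm _ _).trans_le (Nat.mul_le_mul_right _ (mem_range.1 hi))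
    _ ≤ m * ∑ i ∈ range (m + 1), n.choose i := by
        rw [← mul_sum, sum_range_succ' _ m]
        exact Nat.mul_le_mul_left _ (Nat.le_add_right _ _)

end Nat

theorem Real.exp_mul_sum_range_choose_le {n m : ℕ} {c : ℝ} (hc : 0 ≤ c)
    (hcn : c * (n + 1) ≤ 2 * (n + 1 - 2 * m)) :
    exp c * ∑ i ∈ range m, (n.choose i : ℝ) ≤ ∑ i ∈ range (m + 1), (n.choose i : ℝ) := by
  obtain rfl | hm := m.eq_zero_or_pos
  · simp
  have hm' : (1 : ℝ) ≤ m := by exact_mod_cast hm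
  have hmn : m ≤ n + 1 := by exact_mod_cast (by nlinarith : (m : ℝ) ≤ n + 1)
  have hc2 : c < 2 := by nlinarith
  have hratio : (∑ i ∈ range m, (n.choose i : ℝ)) * (n + 1 - m) ≤
      m * ∑ i ∈ range (m + 1), (n.choose i : ℝ) := by
    exact_mod_cast Nat.sum_range_choose_mul_le n m
  have hexp : exp c * m ≤ n + 1 - m := by
    have hpade := exp_le_two_add_div_two_sub hc hc2
    rw [le_div_iff₀ (by linarith)] at hpade
    nlinarith [exp_pos c]
  refine le_of_mul_le_mul_right ?_ (by linarith : (0 : ℝ) < m)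
  calc exp c * (∑ i ∈ range m, (n.choose i : ℝ)) * m
      = (∑ i ∈ range m, (n.choose i : ℝ)) * (exp c * m) := by ring
    _ ≤ (∑ i ∈ range m, (n.choose i : ℝ)) * (n + 1 - m) := by gcongr
    _ ≤ m * ∑ i ∈ range (m + 1), (n.choose i : ℝ) := hratio
    _ = _ := mul_comm _ _

theorem Real.sum_range_choose_sub_le_exp_mul {n M : ℕ} (hM : 2 * M ≤ n + 1) {j : ℕ} (hj : j ≤ M) :
    ∑ i ∈ range (M - j), (n.choose i : ℝ) ≤
      exp (-(2 * j * (j + 1)) / (n + 1)) * ∑ i ∈ range M, (n.choose i : ℝ) := by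
  induction j with
  | zero => simp
  | succ j ih =>
    set c : ℝ := 4 * (j + 1) / (n + 1) with hc_def
    have hc : 0 ≤ c := by positivity
    have hcn : c * (n + 1) ≤ 2 * (n + 1 - 2 * ((M - (j + 1) : ℕ) : ℝ)) := by
      have hM' : 2 * (M : ℝ) ≤ n + 1 := by exact_mod_cast hM
      rw [div_mul_cancel₀ _ (by positivity), Nat.cast_sub hj]
      push_cast
      linarith
    have hstep := exp_mul_sum_range_choose_le hc hcn
    rw [show M - (j + 1) + 1 = M - j by lia] at hstep
    calc ∑ i ∈ range (M - (j + 1)), (n.choose i : ℝ)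
        = exp (-c) * (exp c * ∑ i ∈ range (M - (j + 1)), (n.choose i : ℝ)) := by
          rw [← mul_assoc, ← exp_add, neg_add_cancel, exp_zero, one_mul]
      _ ≤ exp (-c) * (exp (-(2 * j * (j + 1)) / (n + 1)) * ∑ i ∈ range M, (n.choose i : ℝ)) :=
          mul_le_mul_of_nonneg_left (hstep.trans (ih (by lia))) (exp_pos _).le
      _ = exp (-(2 * ↑(j + 1) * (↑(j + 1) + 1)) / (n + 1)) * ∑ i ∈ range M, (n.choose i : ℝ) := by
          rw [← mul_assoc, ← exp_add]
          congr 2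
          rw [hc_def]
          push_cast
          field_simp
          ring

/-- Hoeffding bound on the binomial lower tail:
for `k ≥ 1` and `n ≥ 2k`, `∑_{i=0}^{⌈n/2⌉-k} C(n,i) ≤ 2^{n-1} e^{-2(k-1)²/n}`. -/
theorem stmt_2 (k n : ℕ) (hk : 1 ≤ k) (hn : 2 * k ≤ n) :
    ((∑ i ∈ Finset.range ((n + 1) / 2 - k + 1), n.choose i : ℕ) : ℝ) ≤
      (2 : ℝ) ^ (n - 1) * Real.exp (-2 * ((k : ℝ) - 1) ^ 2 / n) := by
  obtain ⟨j, rfl⟩ : ∃ j, k = j + 1 := ⟨k - 1, by lia⟩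
  set M := (n + 1) / 2
  have hM : 2 * M ≤ n + 1 := by lia
  have htail := Real.sum_range_choose_sub_le_exp_mul hM (j := j) (by lia)
  have hhalf : 2 * ∑ i ∈ range M, (n.choose i : ℝ) ≤ 2 * 2 ^ (n - 1) := by
    rw [← pow_succ', Nat.sub_add_cancel (by lia)]
    exact_mod_cast Nat.two_mul_sum_range_choose_le hM
  have hexponent : -(2 * j * (j + 1)) / (n + 1) ≤ -2 * ((j : ℝ) ^ 2) / n := by
    have hjn : (j : ℝ) ≤ n := by exact_mod_cast (by lia : j ≤ n)
    rw [div_le_div_iff₀ (by positivity) (by exact_mod_cast (by lia : 0 < n))]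
    nlinarith [mul_nonneg (j.cast_nonneg : (0 : ℝ) ≤ j) (sub_nonneg.2 hjn)]
  rw [show M - (j + 1) + 1 = M - j by lia]
  push_cast
  calc ∑ i ∈ range (M - j), (n.choose i : ℝ)
      ≤ Real.exp (-(2 * j * (j + 1)) / (n + 1)) * ∑ i ∈ range M, (n.choose i : ℝ) := htail
    _ ≤ Real.exp (-2 * (j : ℝ) ^ 2 / n) * 2 ^ (n - 1) := by gcongr; linarith
    _ = _ := by rw [add_sub_cancel_right, mul_comm]
end

section
/- Define the classifier C on {0,1}^N by C(x) = 0 if ∑_i x_i < N/2 and C(x) = 1 otherwise. Let A = C^{-1}(0). Then A is nonempty, |A| ≤ 2^{N-1}, and for every real c with 0 < c < 1/4, the number of x ∈ A such that every y ∈ {0,1}^N with Hamming distance d_H(x,y) ≤ c√N − 2 satisfies C(y) = 0 is at least (1 − 4c)·|A|. -/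
/-!
The negation `x ↦ !x` swaps the points of weight below and above `N / 2`, so `A` is half of
the cube outside the balanced layer, whose size is at most `C(N, ⌊N/2⌋) ≤ 2^N / √N`.
A point of `A` that is not robust at radius `k` has weight within `k` of `N / 2`, so it lies in
one of `k` layers, each of size at most `C(N, ⌊N/2⌋)`; for `k ≤ c√N - 2` these make up at most
a `4c`-fraction of `A`.
-/

open Finset

namespace Nat

/- The factor `3 * n + 1` (rather than `2 * n`) makes the induction step go through: it reduces
to `(2n+1)²(3n+4) ≤ 4(n+1)²(3n+1)`. -/
theorem centralBinom_sq_mul_le (n : ℕ) : centralBinom n ^ 2 * (3 * n + 1) ≤ 16 ^ n := by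
  induction n with
  | zero => simp
  | succ n ih =>
    have hpoly : (2 * n + 1) ^ 2 * (3 * n + 4) ≤ 4 * (n + 1) ^ 2 * (3 * n + 1) := by ring_nf; omega
    have key : (n + 1) ^ 2 * (centralBinom (n + 1) ^ 2 * (3 * (n + 1) + 1)) ≤
        (n + 1) ^ 2 * 16 ^ (n + 1) :=
      calc (n + 1) ^ 2 * (centralBinom (n + 1) ^ 2 * (3 * (n + 1) + 1))
          = ((n + 1) * centralBinom (n + 1)) ^ 2 * (3 * n + 4) := by ring
        _ = 4 * centralBinom n ^ 2 * ((2 * n + 1) ^ 2 * (3 * n + 4)) := by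
            rw [succ_mul_centralBinom_succ]; ring
        _ ≤ 4 * centralBinom n ^ 2 * (4 * (n + 1) ^ 2 * (3 * n + 1)) := by gcongr
        _ = 16 * (n + 1) ^ 2 * (centralBinom n ^ 2 * (3 * n + 1)) := by ring
        _ ≤ 16 * (n + 1) ^ 2 * 16 ^ n := by gcongr
        _ = (n + 1) ^ 2 * 16 ^ (n + 1) := by ring
    exact Nat.le_of_mul_le_mul_left key (by positivity)

theorem choose_half_sq_mul_le (N : ℕ) : N.choose (N / 2) ^ 2 * N ≤ 4 ^ N := by
  obtain ⟨n, rfl | rfl⟩ := N.even_or_odd'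
  · rw [Nat.mul_div_cancel_left n two_pos, ← centralBinom_eq_two_mul_choose, pow_mul]
    calc centralBinom n ^ 2 * (2 * n) ≤ centralBinom n ^ 2 * (3 * n + 1) := by gcongr; omega
      _ ≤ 16 ^ n := centralBinom_sq_mul_le n
  · have hodd : centralBinom (n + 1) = 2 * (2 * n + 1).choose n := by
      rw [centralBinom_eq_two_mul_choose, show 2 * (n + 1) = 2 * n + 1 + 1 by ring,
        choose_succ_succ', choose_symm_half]; ring
    have h := centralBinom_sq_mul_le (n + 1)
    rw [hodd, show (16 : ℕ) ^ (n + 1) = 4 * (4 * 4 ^ (2 * n)) by rw [pow_mul]; ring] at h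
    rw [show (2 * n + 1) / 2 = n by omega, pow_succ' (m := 4)]
    calc (2 * n + 1).choose n ^ 2 * (2 * n + 1) ≤ (2 * n + 1).choose n ^ 2 * (3 * (n + 1) + 1) :=
          Nat.mul_le_mul_left _ (by omega)
      _ ≤ 4 * 4 ^ (2 * n) := by rw [mul_pow] at h; nlinarith

theorem choose_half_mul_sqrt_le (N : ℕ) : (N.choose (N / 2) : ℝ) * √N ≤ 2 ^ N := by
  refine le_of_pow_le_pow_left₀ two_ne_zero (by positivity) ?_
  rw [mul_pow, Real.sq_sqrt N.cast_nonneg, ← pow_mul, mul_comm N, pow_mul]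
  exact_mod_cast choose_half_sq_mul_le N

end Nat

namespace BoolCube

variable {ι : Type*} [Fintype ι]

def weight (x : ι → Bool) : ℕ := #{i | x i = true}

theorem weight_add_weight_not (x : ι → Bool) :
    weight x + weight (fun i => !x i) = Fintype.card ι := by
  simpa [weight] using card_filter_add_card_filter_not (s := univ) (fun i => x i = true)

variable [DecidableEq ι]

theorem weight_le_weight_add_hammingDist (x y : ι → Bool) :
    weight y ≤ weight x + hammingDist x y :=
  calc weight y ≤ #(({i | x i = true} : Finset ι) ∪ ({i | x i ≠ y i} : Finset ι)) :=
        card_le_card fun i => by cases hx : x i <;> cases hy : y i <;> simp [hx, hy]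
    _ ≤ weight x + hammingDist x y := card_union_le _ _

theorem card_weight_eq_le (k : ℕ) :
    #{x : ι → Bool | weight x = k} ≤ (Fintype.card ι).choose k :=
  calc #{x : ι → Bool | weight x = k}
      ≤ #((powersetCard k (univ : Finset ι)).image fun s i => decide (i ∈ s)) :=
        card_le_card fun x hx => mem_image.2
          ⟨({i | x i = true} : Finset ι), mem_powersetCard.2 ⟨subset_univ _, (mem_filter.1 hx).2⟩,
            funext fun i => by simp⟩
    _ ≤ #(powersetCard k (univ : Finset ι)) := card_image_le
    _ = (Fintype.card ι).choose k := by rw [card_powersetCard, card_univ]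

theorem card_weight_mem_Ico_le (a b : ℕ) :
    #{x : ι → Bool | weight x ∈ Ico a b} ≤
      (Fintype.card ι).choose (Fintype.card ι / 2) * (b - a) := by
  rw [← Nat.card_Ico a b]
  refine card_le_mul_card_image_of_maps_to (fun x hx => (mem_filter.1 hx).2) _ fun k _ => ?_
  calc #{x ∈ {x : ι → Bool | weight x ∈ Ico a b} | weight x = k}
      ≤ #{x : ι → Bool | weight x = k} := card_le_card (filter_subset_filter _ (subset_univ _))
    _ ≤ (Fintype.card ι).choose (Fintype.card ι / 2) :=
        (card_weight_eq_le k).trans (Nat.choose_le_middle _ _)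

variable (ι) in
def lowerHalf : Finset (ι → Bool) := {x | 2 * weight x < Fintype.card ι}

theorem card_upperHalf_eq_card_lowerHalf :
    #{x : ι → Bool | Fintype.card ι < 2 * weight x} = #(lowerHalf ι) := by
  refine card_nbij' (fun x i => !x i) (fun x i => !x i) ?_ ?_ (fun x _ => by simp)
    (fun x _ => by simp)
  all_goals
    intro x hx
    have := weight_add_weight_not x
    simp [lowerHalf] at hx ⊢
    omega

theorem two_mul_card_lowerHalf_add_card_balanced :
    2 * #(lowerHalf ι) + #{x : ι → Bool | 2 * weight x = Fintype.card ι} =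
      2 ^ Fintype.card ι := by
  have hlower := card_filter_add_card_filter_not (s := (univ : Finset (ι → Bool)))
    (fun x => 2 * weight x < Fintype.card ι)
  have hrest := card_filter_add_card_filter_not
    (s := {x : ι → Bool | ¬2 * weight x < Fintype.card ι}) (fun x => 2 * weight x = Fintype.card ι)
  rw [filter_filter, filter_filter,
    filter_congr (q := fun x => 2 * weight x = Fintype.card ι) fun _ _ => by omega,
    filter_congr (p := fun x => ¬2 * weight x < Fintype.card ι ∧ ¬2 * weight x = Fintype.card ι)
      (q := fun x => Fintype.card ι < 2 * weight x) fun _ _ => by omega,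
    card_upperHalf_eq_card_lowerHalf] at hrest
  rw [card_univ, Fintype.card_fun, Fintype.card_bool] at hlower
  rw [lowerHalf] at *
  omega

theorem card_lowerHalf_le_card_robust_add (k : ℕ) :
    #(lowerHalf ι) ≤ #{x ∈ lowerHalf ι | ∀ y, hammingDist x y ≤ k → y ∈ lowerHalf ι} +
      (Fintype.card ι).choose (Fintype.card ι / 2) * k := by
  set n := Fintype.card ι
  rw [← card_filter_add_card_filter_not (s := lowerHalf ι)
    (fun x => ∀ y, hammingDist x y ≤ k → y ∈ lowerHalf ι)]
  gcongr
  -- `(n + 1) / 2` is `⌈n / 2⌉`: a non-robust point sits in one of the `k` layers just below it.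
  calc #{x ∈ lowerHalf ι | ¬∀ y, hammingDist x y ≤ k → y ∈ lowerHalf ι}
      ≤ #{x : ι → Bool | weight x ∈ Ico ((n + 1) / 2 - k) ((n + 1) / 2)} := by
        refine card_le_card fun x hx => ?_
        simp only [lowerHalf, mem_filter, mem_univ, true_and, not_forall] at hx
        obtain ⟨hx, y, hxy, hy⟩ := hx
        have := weight_le_weight_add_hammingDist x y
        simp only [mem_filter, mem_univ, true_and, mem_Ico]
        omega
    _ ≤ n.choose (n / 2) * ((n + 1) / 2 - ((n + 1) / 2 - k)) := card_weight_mem_Ico_le _ _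
    _ ≤ n.choose (n / 2) * k := by gcongr; omega

theorem two_mul_card_lowerHalf_le : 2 * #(lowerHalf ι) ≤ 2 ^ Fintype.card ι := by
  have := two_mul_card_lowerHalf_add_card_balanced (ι := ι)
  omega

theorem two_pow_le_two_mul_card_lowerHalf_add_choose :
    2 ^ Fintype.card ι ≤ 2 * #(lowerHalf ι) + (Fintype.card ι).choose (Fintype.card ι / 2) := by
  have hbalanced : #{x : ι → Bool | 2 * weight x = Fintype.card ι} ≤
      (Fintype.card ι).choose (Fintype.card ι / 2) :=
    (card_le_card fun x hx => by
      simp only [mem_filter, mem_univ, true_and] at hx ⊢; omega).trans (card_weight_eq_le _)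
  have := two_mul_card_lowerHalf_add_card_balanced (ι := ι)
  omega

theorem choose_half_mul_floor_le_card_lowerHalf {c : ℝ} (hc0 : 0 ≤ c) (hc1 : c ≤ 1) :
    ((Fintype.card ι).choose (Fintype.card ι / 2) : ℝ) * ⌊c * √(Fintype.card ι) - 2⌋₊ ≤
      4 * c * #(lowerHalf ι) := by
  set n := Fintype.card ι
  rcases le_or_gt 0 (c * √n - 2) with hr | hr
  · have hsqrt := Nat.choose_half_mul_sqrt_le n
    have hpow : (2 : ℝ) ^ n ≤ 2 * #(lowerHalf ι) + n.choose (n / 2) := by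
      exact_mod_cast two_pow_le_two_mul_card_lowerHalf_add_choose
    nlinarith [Nat.floor_le hr, Real.sqrt_nonneg n, (n.choose (n / 2)).cast_nonneg (α := ℝ)]
  · rw [Nat.floor_of_nonpos hr.le, Nat.cast_zero, mul_zero]
    positivity

theorem one_sub_mul_card_lowerHalf_le_card_robust {c : ℝ} (hc0 : 0 ≤ c) (hc1 : c ≤ 1) :
    (1 - 4 * c) * #(lowerHalf ι) ≤
      #{x ∈ lowerHalf ι |
        ∀ y, hammingDist x y ≤ ⌊c * √(Fintype.card ι) - 2⌋₊ → y ∈ lowerHalf ι} := by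
  have hcount := card_lowerHalf_le_card_robust_add (ι := ι) ⌊c * √(Fintype.card ι) - 2⌋₊
  have := choose_half_mul_floor_le_card_lowerHalf (ι := ι) hc0 hc1
  rw [← Nat.cast_le (α := ℝ)] at hcount
  push_cast at hcount
  linarith

end BoolCube

open BoolCube in
/-- The majority-vote classifier `C(x) = 0 iff ∑ xᵢ < N/2` has a nonempty class
`A = C⁻¹(0)` with `|A| ≤ 2^{N-1}`, and for `0 < c < 1/4` at least `(1-4c)|A|` points of `A`
are robust to Hamming perturbations of size `c√N - 2`. -/
theorem stmt_4 (N : ℕ) (hN : 1 ≤ N) (c : ℝ) (hc0 : 0 < c) (hc1 : c < 1 / 4)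
    (C : (Fin N → Bool) → Fin 2)
    (hC : ∀ x, C x = if ((Finset.univ.filter (fun i => x i = true)).card : ℝ) < (N : ℝ) / 2
      then 0 else 1)
    (A : Finset (Fin N → Bool))
    (hA : A = (Finset.univ : Finset (Fin N → Bool)).filter (fun x => C x = 0)) :
    A.Nonempty ∧ A.card ≤ 2 ^ (N - 1) ∧
      (1 - 4 * c) * (A.card : ℝ) ≤
        ((A.filter (fun x => ∀ y : Fin N → Bool,
          (hammingDist x y : ℝ) ≤ c * Real.sqrt N - 2 → C y = 0)).card : ℝ) := by
  have hC_eq_zero (x : Fin N → Bool) : C x = 0 ↔ x ∈ lowerHalf (Fin N) := by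
    have : (weight x : ℝ) < N / 2 ↔ 2 * weight x < N := by
      rw [lt_div_iff₀ two_pos, mul_comm]; norm_cast
    rw [hC, lowerHalf, mem_filter, Fintype.card_fin, ← this]
    split_ifs <;> simp_all [weight]
  obtain rfl : A = lowerHalf (Fin N) := by
    rw [hA]; exact filter_congr fun x _ => (hC_eq_zero x).trans (by simp [lowerHalf])
  refine ⟨⟨fun _ => false, by simp [lowerHalf, weight]; omega⟩, ?_, ?_⟩
  · have := two_mul_card_lowerHalf_le (ι := Fin N)
    have := Nat.two_pow_pred_mul_two hN
    simp only [Fintype.card_fin] at *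
    omega
  · have hrobust := one_sub_mul_card_lowerHalf_le_card_robust (ι := Fin N) hc0.le (by linarith)
    rw [Fintype.card_fin] at hrobust
    refine hrobust.trans (Nat.cast_le.2 (card_le_card (monotone_filter_right _ ?_)))
    exact fun x _ h y hy => (hC_eq_zero y).2 (h y (Nat.le_floor hy))
end
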